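/- Let K be an algebraically closed field of characteristic 0 and let n_1,…,n_k, d_1,…,d_k be positive integers. Set r = min_i ⌈(d_i+2)/2⌉ and J = {i : ⌈(d_i+2)/2⌉ = r}, and assume r ≥ 3. Let S be a set of r distinct points of ℙ^{n_1}×⋯×ℙ^{n_k}. If there exist two distinct indices i, ℓ ∈ J such that π_i(S) contains at least 2 distinct points of ℙ^{n_i} and π_ℓ(S) contains at least 2 distinct points of ℙ^{n_ℓ}, then the double points 2S impose independent conditions in multidegree (d_1,…,d_k). (Equivalently, ν(S) ∉ Ter_r(SV^{d_1,…,d_k}_{n_1×⋯×n_k}).) -/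

import Mathlib

open MvPolynomial

/-- Multihomogeneous polynomials of multidegree `d` in the blocks of variables
`x_{i,0}, …, x_{i,n i}` (`i : Fin k`), all of whose first-order partial derivatives vanish at
every point of the family `p` of points of `ℙ^{n 1} × ⋯ × ℙ^{n k}`. -/
noncomputable def svDblVanish (K : Type) [Field K] (k : ℕ) (n d : Fin k → ℕ) {ι : Type}
    (p : ι → (i : Fin k) → (Fin (n i + 1) → K)) :
    Submodule K (MvPolynomial ((i : Fin k) × Fin (n i + 1)) K) :=
  weightedHomogeneousSubmodule K (fun v => Pi.single v.1 1) d ⊓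
    ⨅ (a : ι) (v : (i : Fin k) × Fin (n i + 1)),
      LinearMap.ker
        ((aeval fun w : (i : Fin k) × Fin (n i + 1) => p a w.1 w.2).toLinearMap
          ∘ₗ (pderiv v).toLinearMap)

/-!
Double points impose independent conditions exactly when the map sending a form of multidegree
`d` to its values and first derivatives at the points of `S` has rank `r (∑ n_j + 1)`. At a point
whose block `j` has a nonzero coordinate `t₀`, Euler's formula recovers the derivative along
`x_{j,t₀}` from the value and the other derivatives (and the value from the derivatives, as some
`d_j ≠ 0`), so it suffices that the *reduced* jet map (value and `∑ n_j` derivatives at each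
point) is onto.

To hit the jets at a point `p_a`, choose for every other point `p_b` a block `f b` in which the
projections of `p_a` and `p_b` differ, and a linear form `L_b` in that block vanishing at `p_b`
and equal to `1` at `p_a`. Then `G = ∏ L_b²` is `1` at `p_a` and vanishes doubly at all other
points, and `G` times suitable forms realises every jet at `p_a`, provided `G` has degree `< d_j`
in every block `j`. As `2 r ≤ d_j + 3`, this holds once no block is used more than `r - 2` times,
i.e. once `f` is not constant on the `r - 1` points `b ≠ a`; having distinct projections in two
different blocks `i`, `ℓ` is what allows such a choice of `f`.
-/

namespace SegreVeronese

open Finset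

section Combinatorics

theorem exists_selection_not_constant {α β : Type*} {s : Set α} (hs : s.Nontrivial)
    (R : α → β → Prop)
    (hR : ∀ a ∈ s, ∃ b, R a b) (hR' : ∀ b₀, ∃ a ∈ s, ∃ b ≠ b₀, R a b) :
    ∃ f : α → β, (∀ a ∈ s, R a (f a)) ∧ ∃ a₁ ∈ s, ∃ a₂ ∈ s, f a₁ ≠ f a₂ := by
  classical
  obtain ⟨a₁, ha₁, a₂, ha₂, hne⟩ := hs
  have : Nonempty β := ⟨(hR a₁ ha₁).choose⟩
  choose! g hg using hR
  by_cases hg₁₂ : g a₁ = g a₂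
  · obtain ⟨a₀, ha₀, b, hb, hRb⟩ := hR' (g a₁)
    obtain ⟨a', ha', ha'₀, hga'⟩ : ∃ a' ∈ s, a' ≠ a₀ ∧ g a' = g a₁ := by
      by_cases h : a₁ = a₀
      · exact ⟨a₂, ha₂, h ▸ hne.symm, hg₁₂.symm⟩
      · exact ⟨a₁, ha₁, h, rfl⟩
    refine ⟨Function.update g a₀ b, fun a ha => ?_, a₀, ha₀, a', ha', ?_⟩
    · by_cases h : a = a₀
      · subst h
        rwa [Function.update_self]
      · rw [Function.update_of_ne h]
        exact hg a ha
    · rwa [Function.update_self, Function.update_of_ne ha'₀, hga']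
  · exact ⟨g, hg, a₁, ha₁, a₂, ha₂, hg₁₂⟩

theorem exists_separating_assignment {ι β : Type*} [Fintype ι] [DecidableEq ι] [DecidableEq β]
    {X : β → Type*} (p : ι → (j : β) → X j) (hι : 3 ≤ Fintype.card ι)
    (hp : ∀ a b, a ≠ b → ∃ j, p a j ≠ p b j) {i ℓ : β} (hiℓ : i ≠ ℓ)
    (hi : ∃ a b, p a i ≠ p b i) (hℓ : ∃ a b, p a ℓ ≠ p b ℓ) (a : ι) :
    ∃ f : ι → β, (∀ b ≠ a, p a (f b) ≠ p b (f b)) ∧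
      ∀ j, #{b ∈ univ.erase a | f b = j} + 2 ≤ Fintype.card ι := by
  have hdiff (j : β) (h : ∃ a b, p a j ≠ p b j) : ∃ b, p a j ≠ p b j := by
    by_contra! hall
    obtain ⟨b₁, b₂, h⟩ := h
    exact h ((hall b₁).symm.trans (hall b₂))
  have hs : ((univ.erase a : Finset ι) : Set ι).Nontrivial := by
    refine Finset.one_lt_card_iff_nontrivial.mp ?_
    rw [card_erase_of_mem (mem_univ a), card_univ]
    omega
  obtain ⟨f, hf, a₁, ha₁, a₂, ha₂, hne⟩ :=
    exists_selection_not_constant hs (fun b j => p a j ≠ p b j)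
      (fun b hb => hp a b (by simpa [eq_comm] using hb))
      (fun j₀ => by
        obtain ⟨j, hj₀, hj⟩ : ∃ j ≠ j₀, ∃ a b, p a j ≠ p b j := by
          by_cases h : i = j₀
          · exact ⟨ℓ, h ▸ hiℓ.symm, hℓ⟩
          · exact ⟨i, h, hi⟩
        obtain ⟨b, hb⟩ := hdiff j hj
        have hba : b ≠ a := by
          rintro rfl
          exact hb rfl
        exact ⟨b, by simpa using hba, j, hj₀, hb⟩)
  refine ⟨f, fun b hb => hf b (by simpa using hb), fun j => ?_⟩
  obtain ⟨c, hc, hcj⟩ : ∃ c ∈ univ.erase a, f c ≠ j := by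
    by_cases h : f a₁ = j
    · exact ⟨a₂, by simpa using ha₂, h ▸ hne.symm⟩
    · exact ⟨a₁, by simpa using ha₁, h⟩
  have := card_lt_card (filter_ssubset (p := fun b => f b = j).mpr ⟨c, hc, hcj⟩)
  rw [card_erase_of_mem (mem_univ a), card_univ] at this
  omega

end Combinatorics

section LinearAlgebra

variable {K : Type*} [Field K]

section DoubleVanishing

variable {σ : Type*}

def VanishesDoubly (P : σ → K) (F : MvPolynomial σ K) : Prop :=
  eval P F = 0 ∧ ∀ v, eval P (pderiv v F) = 0

theorem VanishesDoubly.mul_right {P : σ → K} {F : MvPolynomial σ K} (hF : VanishesDoubly P F)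
    (G : MvPolynomial σ K) : VanishesDoubly P (F * G) := by
  refine ⟨by rw [map_mul, hF.1, zero_mul], fun v => ?_⟩
  rw [pderiv_mul, map_add, map_mul, map_mul, hF.1, hF.2 v, zero_mul, zero_mul, add_zero]

theorem VanishesDoubly.of_dvd {P : σ → K} {F G : MvPolynomial σ K} (hF : VanishesDoubly P F)
    (hFG : F ∣ G) : VanishesDoubly P G := by
  obtain ⟨H, rfl⟩ := hFG
  exact hF.mul_right H

theorem eval_pderiv_mul_of_eval_eq_zero {P : σ → K} {L : MvPolynomial σ K} (hL : eval P L = 0)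
    (G : MvPolynomial σ K) (v : σ) :
    eval P (pderiv v (L * G)) = eval P (pderiv v L) * eval P G := by
  rw [pderiv_mul, map_add, map_mul, map_mul, hL, zero_mul, add_zero]

theorem vanishesDoubly_sq {P : σ → K} {L : MvPolynomial σ K} (hL : eval P L = 0) :
    VanishesDoubly P (L ^ 2) := by
  refine ⟨by rw [map_pow, hL, zero_pow two_ne_zero], fun v => ?_⟩
  rw [sq, eval_pderiv_mul_of_eval_eq_zero hL, hL, mul_zero]

end DoubleVanishing

theorem exists_dotProduct_eq_zero_and_eq_one {ι : Type*} [Fintype ι] [DecidableEq ι]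
    {x y : ι → K} (h : x ∉ K ∙ y) : ∃ u : ι → K, u ⬝ᵥ y = 0 ∧ u ⬝ᵥ x = 1 := by
  obtain ⟨φ, hφx, hφ⟩ := Submodule.exists_dual_map_eq_bot_of_notMem h inferInstance
  have hφy : φ y = 0 := by
    have := Submodule.mem_map_of_mem (f := φ) (Submodule.mem_span_singleton_self y)
    rwa [hφ, Submodule.mem_bot] at this
  have hφ_apply (z : ι → K) : (fun t => φ (Pi.single t 1)) ⬝ᵥ z = φ z := by
    rw [φ.pi_apply_eq_sum_univ z, dotProduct]
    simp only [smul_eq_mul, mul_comm]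
    congr! 3 with t
    ext j
    simp [Pi.single_apply, eq_comm]
  refine ⟨(φ x)⁻¹ • fun t => φ (Pi.single t 1), ?_, ?_⟩
  · rw [smul_dotProduct, hφ_apply, hφy, smul_zero]
  · rw [smul_dotProduct, hφ_apply, smul_eq_mul, inv_mul_cancel₀ hφx]

theorem notMem_span_singleton_iff {V : Type*} [AddCommGroup V] [Module K V] {v w : V} :
    v ∉ K ∙ w ↔ ∀ c : K, v ≠ c • w := by
  simp [Submodule.mem_span_singleton, eq_comm]

theorem mk_ne_mk_iff_notMem_span {V : Type*} [AddCommGroup V] [Module K V] {v w : V}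
    (hv : v ≠ 0) (hw : w ≠ 0) :
    Projectivization.mk K v hv ≠ Projectivization.mk K w hw ↔ v ∉ K ∙ w := by
  rw [Ne, Projectivization.mk_eq_mk_iff', Submodule.mem_span_singleton]

end LinearAlgebra

section Multihomogeneous

variable {K : Type*} [Field K] {k : ℕ} {n : Fin k → ℕ}

abbrev Var (n : Fin k → ℕ) : Type := (i : Fin k) × Fin (n i + 1)

abbrev blockWeight (n : Fin k → ℕ) (v : Var n) : Fin k → ℕ := Pi.single v.1 1

theorem weight_blockWeight_apply (μ : Var n →₀ ℕ) (j : Fin k) :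
    Finsupp.weight (blockWeight n) μ j = ∑ t, μ ⟨j, t⟩ := by
  rw [Finsupp.weight_apply, Finsupp.sum_fintype _ _ (by simp), Finset.sum_apply,
    Fintype.sum_sigma, Finset.sum_eq_single j]
  · simp
  · intro i _ hij
    simp [Ne.symm hij]
  · simp

noncomputable def multidegreeEquivSym (d : Fin k → ℕ) :
    {μ : Var n →₀ ℕ | Finsupp.weight (blockWeight n) μ = d} ≃
      ((i : Fin k) → Sym (Fin (n i + 1)) (d i)) :=
  (Equiv.subtypeEquiv Finsupp.sigmaFinsuppEquivPiFinsupp fun μ => by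
      simp only [Set.mem_ofPred_eq, funext_iff, weight_blockWeight_apply]
      simp [Finsupp.sum_fintype]).trans
    (Equiv.subtypePiEquivPi.trans (Equiv.piCongrRight fun i => (Sym.equivNatSum _ _).symm))

theorem finrank_weightedHomogeneousSubmodule_blockWeight (d : Fin k → ℕ) :
    Module.finrank K (weightedHomogeneousSubmodule K (blockWeight n) d) =
      ∏ i, (n i + d i).choose (n i) := by
  rw [weightedHomogeneousSubmodule_eq_finsupp_supported]
  refine (Module.finrank_eq_nat_card_basis (basisRestrictSupport K _)).trans ?_
  rw [Nat.card_congr (multidegreeEquivSym d), Nat.card_pi]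
  refine Finset.prod_congr rfl fun i _ => ?_
  rw [Nat.card_eq_fintype_card, Sym.card_sym_eq_choose, Fintype.card_fin,
    add_right_comm, Nat.add_sub_cancel, Nat.choose_symm_add]

instance (d : Fin k → ℕ) :
    FiniteDimensional K (weightedHomogeneousSubmodule K (blockWeight n) d) := by
  rw [weightedHomogeneousSubmodule_eq_finsupp_supported]
  have := Finite.of_equiv _ (multidegreeEquivSym (n := n) d).symm
  exact Module.Finite.of_basis (basisRestrictSupport K _)

theorem sum_blockWeight_smul_mul_eval_pderiv {d : Fin k → ℕ} {F : MvPolynomial (Var n) K}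
    (hF : F.IsWeightedHomogeneous (blockWeight n) d) (P : Var n → K) (j : Fin k) :
    ∑ v, blockWeight n v j • (P v * eval P (pderiv v F)) = d j • eval P F := by
  have hFj : F.IsWeightedHomogeneous (fun v => blockWeight n v j) (d j) := fun μ hμ => by
    simp only [← hF hμ, Finsupp.weight_apply, Finsupp.sum, Finset.sum_apply, Pi.smul_apply]
  simpa using congrArg (eval P) hFj.sum_weight_X_mul_pderiv

theorem eval_pderiv_eq_zero_of_forall_succAbove {d : Fin k → ℕ} {F : MvPolynomial (Var n) K}
    (hF : F.IsWeightedHomogeneous (blockWeight n) d) {P : Var n → K} {j : Fin k}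
    {t₀ : Fin (n j + 1)} (ht₀ : P ⟨j, t₀⟩ ≠ 0) (hval : eval P F = 0)
    (hder : ∀ s, eval P (pderiv ⟨j, t₀.succAbove s⟩ F) = 0) :
    eval P (pderiv ⟨j, t₀⟩ F) = 0 := by
  have euler := sum_blockWeight_smul_mul_eval_pderiv hF P j
  rw [hval, smul_zero, Finset.sum_eq_single ⟨j, t₀⟩] at euler
  · simpa [ht₀] using euler
  · rintro ⟨j', t⟩ _ hne
    by_cases hj : j' = j
    · subst hj
      obtain ⟨s, rfl⟩ := Fin.exists_succAbove_eq (y := t₀) fun h => hne (h ▸ rfl)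
      rw [hder, mul_zero, smul_zero]
    · simp [hj]
  · simp

theorem eval_eq_zero_of_forall_eval_pderiv_eq_zero {d : Fin k → ℕ} {F : MvPolynomial (Var n) K}
    (hF : F.IsWeightedHomogeneous (blockWeight n) d) {j₀ : Fin k} (hd : (d j₀ : K) ≠ 0)
    {P : Var n → K} (hder : ∀ v, eval P (pderiv v F) = 0) : eval P F = 0 := by
  have euler := sum_blockWeight_smul_mul_eval_pderiv hF P j₀
  simp only [hder, mul_zero, smul_zero, Finset.sum_const_zero, nsmul_eq_mul] at euler
  exact (mul_eq_zero.mp euler.symm).resolve_left hd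

noncomputable def linearForm (j : Fin k) (u : Fin (n j + 1) → K) : MvPolynomial (Var n) K :=
  ∑ t, C (u t) * X ⟨j, t⟩

theorem eval_linearForm (P : Var n → K) (j : Fin k) (u : Fin (n j + 1) → K) :
    eval P (linearForm j u) = u ⬝ᵥ fun t => P ⟨j, t⟩ := by
  simp [linearForm, dotProduct]

theorem pderiv_linearForm_self (j : Fin k) (u : Fin (n j + 1) → K) (t : Fin (n j + 1)) :
    pderiv ⟨j, t⟩ (linearForm j u) = C (u t) := by
  simp [linearForm, pderiv_X, Pi.single_apply]

theorem pderiv_linearForm_of_ne (j : Fin k) (u : Fin (n j + 1) → K) {v : Var n}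
    (hv : v.1 ≠ j) : pderiv v (linearForm j u) = 0 := by
  simp only [linearForm, map_sum, pderiv_C_mul, pderiv_X, Pi.single_apply, mul_ite, mul_one,
    mul_zero]
  exact Finset.sum_eq_zero fun t _ => if_neg fun h => hv (by rw [← h])

theorem isWeightedHomogeneous_linearForm (j : Fin k) (u : Fin (n j + 1) → K) :
    (linearForm j u).IsWeightedHomogeneous (blockWeight n) (Pi.single j 1) :=
  IsWeightedHomogeneous.sum _ _ _ fun _ _ => (isWeightedHomogeneous_X K _ _).C_mul _

theorem exists_isWeightedHomogeneous_eval_eq_one {P : Var n → K} {t₀ : (j : Fin k) → Fin (n j + 1)}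
    (ht₀ : ∀ j, P ⟨j, t₀ j⟩ ≠ 0) (e : Fin k → ℕ) :
    ∃ Q : MvPolynomial (Var n) K, Q.IsWeightedHomogeneous (blockWeight n) e ∧ eval P Q = 1 := by
  refine ⟨∏ j, (C (P ⟨j, t₀ j⟩)⁻¹ * X ⟨j, t₀ j⟩) ^ e j, ?_, ?_⟩
  · have := IsWeightedHomogeneous.prod (w := blockWeight n) univ
      (fun j => (C (P ⟨j, t₀ j⟩)⁻¹ * X ⟨j, t₀ j⟩) ^ e j) (fun j => (Pi.single j (e j) : Fin k → ℕ))
      fun j _ => by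
        simpa [← Pi.single_smul'] using
          ((isWeightedHomogeneous_X K (blockWeight n) ⟨j, t₀ j⟩).C_mul _).pow (e j)
    rwa [Finset.univ_sum_single] at this
  · simp [ht₀]

variable {ι : Type*}

/-- Value and first derivatives at each point `S a`, except the derivative along the coordinate
`t₀ a j` of each block, which Euler's formula recovers when that coordinate is nonzero. -/
noncomputable def reducedJet (S : ι → (i : Fin k) → Fin (n i + 1) → K)
    (t₀ : ι → (j : Fin k) → Fin (n j + 1)) :
    MvPolynomial (Var n) K →ₗ[K] (ι × Option ((j : Fin k) × Fin (n j)) → K) :=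
  LinearMap.pi fun c => c.2.elim (aeval (Sigma.uncurry (S c.1))).toLinearMap fun x =>
    (aeval (Sigma.uncurry (S c.1))).toLinearMap ∘ₗ
      (pderiv (⟨x.1, (t₀ c.1 x.1).succAbove x.2⟩ : Var n)).toLinearMap

variable (S : ι → (i : Fin k) → Fin (n i + 1) → K) (t₀ : ι → (j : Fin k) → Fin (n j + 1))

@[simp]
theorem reducedJet_apply_none (F : MvPolynomial (Var n) K) (a : ι) :
    reducedJet S t₀ F (a, none) = eval (Sigma.uncurry (S a)) F :=
  rfl

@[simp]
theorem reducedJet_apply_some (F : MvPolynomial (Var n) K) (a : ι) (j : Fin k) (s : Fin (n j)) :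
    reducedJet S t₀ F (a, some ⟨j, s⟩) =
      eval (Sigma.uncurry (S a)) (pderiv ⟨j, (t₀ a j).succAbove s⟩ F) :=
  rfl

theorem reducedJet_eq_zero_of_vanishesDoubly {F : MvPolynomial (Var n) K} {a : ι}
    (hF : VanishesDoubly (Sigma.uncurry (S a)) F) (o : Option ((j : Fin k) × Fin (n j))) :
    reducedJet S t₀ F (a, o) = 0 := by
  rcases o with _ | ⟨j, s⟩
  · exact hF.1
  · exact hF.2 _

variable {S t₀}

theorem reducedJet_eq_zero_iff {d : Fin k → ℕ} {j₀ : Fin k} (hd : (d j₀ : K) ≠ 0)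
    (ht₀ : ∀ a j, S a j (t₀ a j) ≠ 0) {F : MvPolynomial (Var n) K}
    (hF : F.IsWeightedHomogeneous (blockWeight n) d) :
    reducedJet S t₀ F = 0 ↔ ∀ a v, eval (Sigma.uncurry (S a)) (pderiv v F) = 0 := by
  constructor
  · rintro h a ⟨j, t⟩
    have hsome (s : Fin (n j)) :
        eval (Sigma.uncurry (S a)) (pderiv ⟨j, (t₀ a j).succAbove s⟩ F) = 0 :=
      congrFun h (a, some ⟨j, s⟩)
    obtain rfl | ⟨s, rfl⟩ := (t₀ a j).eq_self_or_eq_succAbove t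
    · exact eval_pderiv_eq_zero_of_forall_succAbove hF (ht₀ a j) (congrFun h (a, none)) hsome
    · exact hsome s
  · intro h
    ext ⟨a, _ | ⟨j, s⟩⟩
    · exact eval_eq_zero_of_forall_eval_pderiv_eq_zero hF hd (h a)
    · exact h a _

structure IsolatesPoint (S : ι → (i : Fin k) → Fin (n i + 1) → K) (a : ι) (e : Fin k → ℕ)
    (G : MvPolynomial (Var n) K) : Prop where
  isWeightedHomogeneous : G.IsWeightedHomogeneous (blockWeight n) e
  eval_eq_one : eval (Sigma.uncurry (S a)) G = 1
  vanishesDoubly : ∀ b ≠ a, VanishesDoubly (Sigma.uncurry (S b)) G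

theorem single_some_mem_map_reducedJet [DecidableEq ι] {a : ι} (ht₀ : ∀ j, S a j (t₀ a j) ≠ 0)
    {d e : Fin k → ℕ} {G : MvPolynomial (Var n) K} (hG : IsolatesPoint S a e G)
    (he : ∀ j, e j < d j) (j : Fin k) (s : Fin (n j)) :
    Pi.single (a, some ⟨j, s⟩) 1 ∈
      (weightedHomogeneousSubmodule K (blockWeight n) d).map (reducedJet S t₀) := by
  -- `linearForm j u` vanishes at `S a`, and its derivatives along the coordinates `≠ t₀ a j`
  -- are `1` at `t` and `0` elsewhere; the factor `G * Q` fixes the degree and the other points.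
  set t := (t₀ a j).succAbove s
  set u : Fin (n j + 1) → K :=
    Pi.single t 1 - Pi.single (t₀ a j) (S a j t / S a j (t₀ a j))
  have hM : eval (Sigma.uncurry (S a)) (linearForm j u) = 0 := by
    rw [eval_linearForm]
    simp [u, sub_dotProduct, single_dotProduct, Sigma.uncurry, ht₀ j]
  obtain ⟨Q, hQ, hQ1⟩ :=
    exists_isWeightedHomogeneous_eval_eq_one (P := Sigma.uncurry (S a)) ht₀ (d - e - Pi.single j 1)
  refine ⟨linearForm j u * (G * Q), ?_, ?_⟩
  · have := (isWeightedHomogeneous_linearForm j u).mul (hG.isWeightedHomogeneous.mul hQ)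
    rw [SetLike.mem_coe, mem_weightedHomogeneousSubmodule]
    convert this using 1
    ext j'
    have := he j'
    by_cases hj : j' = j
    · subst hj
      simp only [Pi.add_apply, Pi.single_eq_same, Pi.sub_apply]
      omega
    · simp only [Pi.add_apply, Pi.sub_apply, Pi.single_eq_of_ne hj, tsub_zero, zero_add]
      omega
  ext ⟨b, o⟩
  by_cases hb : b = a
  · subst hb
    rcases o with _ | ⟨j', s'⟩
    · rw [reducedJet_apply_none, map_mul, hM, zero_mul, Pi.single_eq_of_ne (by simp)]
    · rw [reducedJet_apply_some, eval_pderiv_mul_of_eval_eq_zero hM, map_mul,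
        hG.eval_eq_one, hQ1, mul_one, mul_one]
      by_cases hj : j' = j
      · subst hj
        simp [pderiv_linearForm_self, u, t, Pi.single_apply, Fin.succAbove_ne]
      · simp [pderiv_linearForm_of_ne _ _ (v := ⟨j', _⟩) hj, hj]
  · rw [reducedJet_eq_zero_of_vanishesDoubly _ _
      ((hG.vanishesDoubly b hb).of_dvd (dvd_mul_of_dvd_right (dvd_mul_right G Q) _)),
      Pi.single_eq_of_ne (by simp [hb])]

theorem single_none_mem_map_reducedJet [DecidableEq ι] [Fintype ι] {a : ι}
    (ht₀ : ∀ j, S a j (t₀ a j) ≠ 0) {d e : Fin k → ℕ} {G : MvPolynomial (Var n) K}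
    (hG : IsolatesPoint S a e G) (he : ∀ j, e j < d j) :
    Pi.single (a, none) 1 ∈
      (weightedHomogeneousSubmodule K (blockWeight n) d).map (reducedJet S t₀) := by
  obtain ⟨Q, hQ, hQ1⟩ :=
    exists_isWeightedHomogeneous_eval_eq_one (P := Sigma.uncurry (S a)) ht₀ (d - e)
  have hGQ : reducedJet S t₀ (G * Q) ∈
      (weightedHomogeneousSubmodule K (blockWeight n) d).map (reducedJet S t₀) := by
    refine Submodule.mem_map_of_mem ?_
    rw [mem_weightedHomogeneousSubmodule]
    convert hG.isWeightedHomogeneous.mul hQ using 1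
    ext j
    have := he j
    simp only [Pi.add_apply, Pi.sub_apply]
    omega
  -- `w` is supported on the tangent coordinates at `a`, which are already in the image.
  let w := reducedJet S t₀ (G * Q) - Pi.single (a, none) 1
  suffices hw : w ∈ (weightedHomogeneousSubmodule K (blockWeight n) d).map (reducedJet S t₀) by
    simpa [w] using Submodule.sub_mem _ hGQ hw
  rw [← Finset.univ_sum_single w]
  refine Submodule.sum_mem _ fun ⟨b, o⟩ _ => ?_
  by_cases hb : b = a
  · subst hb
    rcases o with _ | ⟨j, s⟩
    · simp [w, hG.eval_eq_one, hQ1]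
    · rw [← mul_one (w _), ← smul_eq_mul, Pi.single_smul']
      exact Submodule.smul_mem _ _ (single_some_mem_map_reducedJet ht₀ hG he j s)
  · have hwb : w (b, o) = 0 := by
      simp only [w, Pi.sub_apply]
      rw [reducedJet_eq_zero_of_vanishesDoubly _ _
        ((hG.vanishesDoubly b hb).mul_right Q), Pi.single_eq_of_ne (by simp [hb]), sub_zero]
    rw [hwb, Pi.single_zero]
    exact zero_mem _

theorem map_reducedJet_eq_top [DecidableEq ι] [Fintype ι] (ht₀ : ∀ a j, S a j (t₀ a j) ≠ 0)
    {d : Fin k → ℕ} (hG : ∀ a, ∃ e G, IsolatesPoint S a e G ∧ ∀ j, e j < d j) :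
    (weightedHomogeneousSubmodule K (blockWeight n) d).map (reducedJet S t₀) = ⊤ := by
  rw [eq_top_iff, ← (Pi.basisFun K _).span_eq, Submodule.span_le]
  rintro _ ⟨⟨a, o⟩, rfl⟩
  obtain ⟨e, G, hG, he⟩ := hG a
  rw [Pi.basisFun_apply]
  rcases o with _ | ⟨j, s⟩
  · exact single_none_mem_map_reducedJet (ht₀ a) hG he
  · exact single_some_mem_map_reducedJet (ht₀ a) hG he j s

theorem exists_isolatesPoint [DecidableEq ι] [Fintype ι] {a : ι} {f : ι → Fin k}
    (hf : ∀ b ≠ a, S a (f b) ∉ K ∙ S b (f b)) :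
    ∃ G, IsolatesPoint S a (fun j => 2 * #{b ∈ univ.erase a | f b = j}) G := by
  have hu (b : ι) : ∃ u : Fin (n (f b) + 1) → K,
      b ≠ a → u ⬝ᵥ S b (f b) = 0 ∧ u ⬝ᵥ S a (f b) = 1 := by
    by_cases hb : b = a
    · exact ⟨0, fun h => absurd hb h⟩
    · obtain ⟨u, hu⟩ := exists_dotProduct_eq_zero_and_eq_one (hf b hb)
      exact ⟨u, fun _ => hu⟩
  choose u hu using hu
  refine ⟨∏ b ∈ univ.erase a, linearForm (f b) (u b) ^ 2, ⟨?_, ?_, fun b hb => ?_⟩⟩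
  · have hdeg : (∑ b ∈ univ.erase a, Pi.single (f b) 2 : Fin k → ℕ) =
        fun j => 2 * #{b ∈ univ.erase a | f b = j} := by
      ext j
      simp [Finset.sum_apply, Pi.single_apply, eq_comm, Finset.sum_ite, mul_comm]
    rw [← hdeg]
    refine IsWeightedHomogeneous.prod _ _ _ fun b _ => ?_
    simpa [← Pi.single_smul'] using (isWeightedHomogeneous_linearForm (f b) (u b)).pow 2
  · rw [map_prod]
    refine Finset.prod_eq_one fun b hb => ?_
    rw [map_pow, eval_linearForm]
    simp [Sigma.uncurry, (hu b (Finset.ne_of_mem_erase hb)).2]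
  · refine (vanishesDoubly_sq ?_).of_dvd (Finset.dvd_prod_of_mem _ (by simpa using hb))
    rw [eval_linearForm]
    exact (hu b hb).1

end Multihomogeneous

section Count

variable {K : Type} [Field K] {k : ℕ} {n : Fin k → ℕ} {ι : Type}
  {S : ι → (i : Fin k) → Fin (n i + 1) → K} {t₀ : ι → (j : Fin k) → Fin (n j + 1)}

theorem svDblVanish_eq_map_ker {d : Fin k → ℕ} {j₀ : Fin k} (hd : (d j₀ : K) ≠ 0)
    (ht₀ : ∀ a j, S a j (t₀ a j) ≠ 0) :
    svDblVanish K k n d S = (LinearMap.ker (reducedJet S t₀ ∘ₗ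
      (weightedHomogeneousSubmodule K (blockWeight n) d).subtype)).map
        (weightedHomogeneousSubmodule K (blockWeight n) d).subtype := by
  ext F
  simp only [svDblVanish, Submodule.mem_inf, Submodule.mem_iInf, LinearMap.mem_ker,
    Submodule.mem_map, LinearMap.coe_comp, Function.comp_apply, Submodule.coe_subtype]
  constructor
  · rintro ⟨hF, hder⟩
    exact ⟨⟨F, hF⟩, (reducedJet_eq_zero_iff hd ht₀ hF).mpr hder, rfl⟩
  · rintro ⟨⟨F, hF⟩, hjet, rfl⟩
    exact ⟨hF, (reducedJet_eq_zero_iff hd ht₀ hF).mp hjet⟩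

theorem finrank_svDblVanish_add_card_mul [Fintype ι] {d : Fin k → ℕ} {j₀ : Fin k}
    (hd : (d j₀ : K) ≠ 0) (ht₀ : ∀ a j, S a j (t₀ a j) ≠ 0)
    (hsurj : (weightedHomogeneousSubmodule K (blockWeight n) d).map (reducedJet S t₀) = ⊤) :
    Module.finrank K (svDblVanish K k n d S) + Fintype.card ι * ((∑ j, n j) + 1) =
      ∏ j, (n j + d j).choose (n j) := by
  let Θ := reducedJet S t₀ ∘ₗ (weightedHomogeneousSubmodule K (blockWeight n) d).subtype
  have hrange : LinearMap.range Θ = ⊤ := by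
    rw [LinearMap.range_comp, Submodule.range_subtype, hsurj]
  have key := LinearMap.finrank_range_add_finrank_ker Θ
  rw [hrange, finrank_top, Module.finrank_fintype_fun_eq_card, Fintype.card_prod,
    Fintype.card_option, Fintype.card_sigma, finrank_weightedHomogeneousSubmodule_blockWeight]
    at key
  rw [svDblVanish_eq_map_ker hd ht₀, Submodule.finrank_map_subtype_eq, ← key, add_comm]
  simp [Θ]

end Count

end SegreVeronese

open SegreVeronese

theorem sv_two_projections_in_J_not_terracini_general
    {K : Type} [Field K] [CharZero K]
    (k : ℕ) (n d : Fin k → ℕ)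
    (r : ℕ) (hr3 : 3 ≤ r)
    (hrle : ∀ i, r ≤ (d i + 3) / 2)
    (S : Fin r → (i : Fin k) → (Fin (n i + 1) → K))
    (hS0 : ∀ a i, S a i ≠ 0)
    (hSd : ∀ a b, a ≠ b → ∃ i, ∀ c : K, S a i ≠ c • S b i)
    (i ℓ : Fin k) (hiℓ : i ≠ ℓ)
    (hbigi : ∃ a b : Fin r, ∀ c : K, S a i ≠ c • S b i)
    (hbigℓ : ∃ a b : Fin r, ∀ c : K, S a ℓ ≠ c • S b ℓ) :
    Module.finrank K ↥(svDblVanish K k n d S) + r * ((∑ j, n j) + 1)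
      = ∏ j, Nat.choose (n j + d j) (n j) := by
  let p a j : Projectivization K (Fin (n j + 1) → K) := .mk K (S a j) (hS0 a j)
  have hp a b j : p a j ≠ p b j ↔ S a j ∉ K ∙ S b j := mk_ne_mk_iff_notMem_span _ _
  choose t₀ ht₀ using fun a j => Function.ne_iff.mp (hS0 a j)
  suffices hG : ∀ a, ∃ e G, IsolatesPoint S a e G ∧ ∀ j, e j < d j by
    simpa using finrank_svDblVanish_add_card_mul (j₀ := i)
      (Nat.cast_ne_zero.mpr (by have := hrle i; omega)) ht₀ (map_reducedJet_eq_top ht₀ hG)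
  intro a
  obtain ⟨f, hf, hcard⟩ := exists_separating_assignment p (by simpa using hr3)
    (fun a b hab => by simpa [hp, notMem_span_singleton_iff] using hSd a b hab) hiℓ
    (by simpa [hp, notMem_span_singleton_iff] using hbigi)
    (by simpa [hp, notMem_span_singleton_iff] using hbigℓ) a
  obtain ⟨G, hG⟩ := exists_isolatesPoint fun b hb => (hp a b (f b)).mp (hf b hb)
  refine ⟨_, G, hG, fun j => ?_⟩
  have := hrle j
  have := hcard j
  rw [Fintype.card_fin] at this
  omega

/-- **Two nontrivial projections inside `J` prevent Terracini membership.**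
Let `r = min_i ⌈(d i + 2)/2⌉ ≥ 3` (note `⌈(d+2)/2⌉ = (d+3)/2` with integer division) and
`J = {i : ⌈(d i + 2)/2⌉ = r}`.  Let `S` be a set of `r` distinct points of
`ℙ^{n 1} × ⋯ × ℙ^{n k}`.  If there are two distinct indices `i, ℓ ∈ J` such that both
`π_i(S)` and `π_ℓ(S)` contain at least two distinct points, then the double points `2S` impose
independent conditions in multidegree `d`, i.e. `ν(S) ∉ Ter_r(SV)`. -/
theorem sv_two_projections_in_J_not_terracini
    {K : Type} [Field K] [IsAlgClosed K] [CharZero K]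
    (k : ℕ) (n d : Fin k → ℕ)
    (hn : ∀ i, 1 ≤ n i) (hd : ∀ i, 1 ≤ d i)
    (r : ℕ) (hr3 : 3 ≤ r)
    (hrle : ∀ i, r ≤ (d i + 3) / 2) (hrmem : ∃ i, (d i + 3) / 2 = r)
    (S : Fin r → (i : Fin k) → (Fin (n i + 1) → K))
    (hS0 : ∀ a i, S a i ≠ 0)
    (hSd : ∀ a b, a ≠ b → ∃ i, ∀ c : K, S a i ≠ c • S b i)
    (i ℓ : Fin k) (hiℓ : i ≠ ℓ)
    (hi : (d i + 3) / 2 = r) (hℓ : (d ℓ + 3) / 2 = r)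
    (hbigi : ∃ a b : Fin r, ∀ c : K, S a i ≠ c • S b i)
    (hbigℓ : ∃ a b : Fin r, ∀ c : K, S a ℓ ≠ c • S b ℓ) :
    Module.finrank K ↥(svDblVanish K k n d S) + r * ((∑ j, n j) + 1)
      = ∏ j, Nat.choose (n j + d j) (n j) :=
  sv_two_projections_in_J_not_terracini_general k n d r hr3 hrle S hS0 hSd i ℓ hiℓ hbigi hbigℓ
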